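/- Let f : ℝⁿ \ {0} → ℝ be locally Lipschitz continuous. Then the map I : (0,∞) → ℝ given by I(s) = ∫_{∂B_s(0)} f(y) dH^{n−1}(y) is locally Lipschitz continuous on (0,∞). -/

import Mathlib

/-!
Scaling the sphere of radius `s` onto the unit sphere gives
`I(s) = s ^ (n - 1) * ∫_{∂B₁} f (s • y) dH^{n-1}(y)`. On `[c, d] ⊂ (0, ∞)` the function `f` is
Lipschitz on the compact annulus `c ≤ ‖x‖ ≤ d`, so the integral over the unit sphere is Lipschitz
in `s` with constant `Lip(f) * H^{n-1}(∂B₁)`, and a product of Lipschitz functions on a compact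
interval is Lipschitz. The unit sphere has finite `H^{n-1}`-measure because it is the radial
projection of the boundary of the cube `[-1, 1]ⁿ`, a finite union of isometric copies of
`[-1, 1]ⁿ⁻¹`.
-/

open MeasureTheory Metric Set Pointwise
open scoped ENNReal NNReal

lemma lipschitzOnWith_inv_norm_smul {F : Type*} [NormedAddCommGroup F] [NormedSpace ℝ F] :
    LipschitzOnWith 2 (fun y : F => ‖y‖⁻¹ • y) {y | 1 ≤ ‖y‖} := by
  refine LipschitzOnWith.of_dist_le_mul fun x (hx : 1 ≤ ‖x‖) y (hy : 1 ≤ ‖y‖) => ?_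
  have hx0 : ‖x‖ ≠ 0 := (one_pos.trans_le hx).ne'
  have hy0 : ‖y‖ ≠ 0 := (one_pos.trans_le hy).ne'
  have hdecomp : ‖x‖⁻¹ • x - ‖y‖⁻¹ • y = ‖x‖⁻¹ • ((x - y) + (‖y‖ - ‖x‖) • ‖y‖⁻¹ • y) := by
    match_scalars
    · field_simp
    · field_simp
      ring
  rw [dist_eq_norm, hdecomp, norm_smul, norm_inv, norm_norm, dist_eq_norm]
  calc ‖x‖⁻¹ * ‖x - y + (‖y‖ - ‖x‖) • ‖y‖⁻¹ • y‖ ≤ 1 * (‖x - y‖ + ‖x - y‖) := by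
        gcongr
        · exact inv_le_one_of_one_le₀ hx
        · refine norm_add_le_of_le le_rfl ?_
          rw [norm_smul, norm_smul, norm_inv, norm_norm, inv_mul_cancel₀ hy0, mul_one,
            Real.norm_eq_abs, abs_sub_comm]
          exact abs_norm_sub_norm_le x y
    _ = 2 * ‖x - y‖ := by ring

lemma lipschitzWith_insertNth {m : ℕ} (j : Fin (m + 1)) (σ : ℝ) :
    LipschitzWith 1 (fun p : Fin m → ℝ => (j.insertNth σ p : Fin (m + 1) → ℝ)) := by
  refine LipschitzWith.of_dist_le_mul fun p q => ?_
  rw [NNReal.coe_one, one_mul, dist_pi_le_iff dist_nonneg, j.forall_iff_succAbove]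
  simpa using dist_le_pi_dist p q

lemma sphere_pi_subset_iUnion_image_insertNth (m : ℕ) :
    sphere (0 : Fin (m + 1) → ℝ) 1 ⊆
      ⋃ (j : Fin (m + 1)) (σ ∈ ({1, -1} : Set ℝ)),
        (fun p : Fin m → ℝ => (j.insertNth σ p : Fin (m + 1) → ℝ)) '' closedBall 0 1 := by
  intro x hx
  rw [mem_sphere_zero_iff_norm] at hx
  obtain ⟨j, hj⟩ : ∃ j, ‖x j‖ = 1 := by
    by_contra! h
    exact ((pi_norm_lt_iff one_pos).2 fun j =>
      ((norm_le_pi_norm x j).trans hx.le).lt_of_ne (h j)).ne hx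
  simp only [mem_iUnion, mem_image]
  refine ⟨j, x j, ?_, j.removeNth x, ?_, j.insertNth_self_removeNth x⟩
  · rw [Real.norm_eq_abs, abs_eq zero_le_one] at hj
    exact hj
  · rw [mem_closedBall_zero_iff, ← hx]
    exact pi_norm_le_iff_of_nonneg (norm_nonneg x) |>.2 fun k => norm_le_pi_norm x _

lemma hausdorffMeasure_sphere_pi_lt_top (m : ℕ) :
    μH[m] (sphere (0 : Fin (m + 1) → ℝ) 1) < ∞ := by
  have hball : μH[m] (closedBall (0 : Fin m → ℝ) 1) < ∞ := by
    have hvol : (μH[m] : Measure (Fin m → ℝ)) = volume := by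
      simpa using hausdorffMeasure_pi_real (ι := Fin m)
    exact hvol ▸ measure_closedBall_lt_top
  refine (measure_mono (sphere_pi_subset_iUnion_image_insertNth m)).trans_lt <|
    (measure_iUnion_fintype_le _ _).trans_lt <| ENNReal.sum_lt_top.2 fun j _ =>
      measure_biUnion_lt_top (toFinite _) fun σ _ => ?_
  refine ((lipschitzWith_insertNth j σ).hausdorffMeasure_image_le m.cast_nonneg _).trans_lt ?_
  simpa using hball

lemma hausdorffMeasure_unitSphere_lt_top (m : ℕ) :
    μH[m] (sphere (0 : EuclideanSpace ℝ (Fin (m + 1))) 1) < ∞ := by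
  set φ : (Fin (m + 1) → ℝ) → EuclideanSpace ℝ (Fin (m + 1)) :=
    fun x => ‖WithLp.toLp 2 x‖⁻¹ • WithLp.toLp 2 x
  have hφ : LipschitzOnWith _ φ (sphere 0 1) :=
    lipschitzOnWith_inv_norm_smul.comp (PiLp.lipschitzWith_toLp 2 _).lipschitzOnWith
      fun x hx => (mem_sphere_zero_iff_norm.1 hx).ge.trans <|
        (pi_norm_le_iff_of_nonneg (norm_nonneg _)).2 fun i => PiLp.norm_apply_le (WithLp.toLp 2 x) i
  have hsub : sphere (0 : EuclideanSpace ℝ (Fin (m + 1))) 1 ⊆ φ '' sphere 0 1 := by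
    intro x hx
    rw [mem_sphere_zero_iff_norm] at hx
    have hc : ‖x.ofLp‖ ≠ 0 := by
      rw [norm_ne_zero_iff, ne_eq, WithLp.ofLp_eq_zero]
      rintro rfl
      simp at hx
    refine ⟨‖x.ofLp‖⁻¹ • x.ofLp, ?_, ?_⟩
    · rw [mem_sphere_zero_iff_norm, norm_smul, norm_inv, norm_norm, inv_mul_cancel₀ hc]
    · simp [φ, norm_smul, hx, hc]
  calc μH[m] (sphere (0 : EuclideanSpace ℝ (Fin (m + 1))) 1)
      ≤ μH[m] (φ '' sphere 0 1) := measure_mono hsub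
    _ < ∞ := (hφ.hausdorffMeasure_image_le m.cast_nonneg).trans_lt <|
        ENNReal.mul_lt_top (ENNReal.rpow_lt_top_of_nonneg m.cast_nonneg ENNReal.coe_ne_top)
          (hausdorffMeasure_sphere_pi_lt_top m)

section Scaling

variable {E G : Type*} [NormedAddCommGroup E] [NormedSpace ℝ E] [MeasurableSpace E] [BorelSpace E]
  [NormedAddCommGroup G] [NormedSpace ℝ G] {d s : ℝ}

lemma hausdorffMeasure_restrict_sphere_eq_smul_map (hd : 0 ≤ d) (hs : 0 < s) :
    (μH[d] : Measure E).restrict (sphere 0 s) =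
      ‖s‖₊ ^ d • (μH[d].restrict (sphere 0 1)).map (s • ·) := by
  have hT : MeasurableEmbedding (s • · : E → E) :=
    (Homeomorph.smulOfNeZero s hs.ne').measurableEmbedding
  ext A hA
  have hset : A ∩ sphere 0 s = s • ((s • ·) ⁻¹' A ∩ sphere (0 : E) 1) := by
    rw [smul_set_inter₀ hs.ne', smul_sphere' hs.ne', smul_zero, Real.norm_of_nonneg hs.le, mul_one,
      preimage_smul₀ hs.ne', smul_inv_smul₀ hs.ne']
  rw [Measure.restrict_apply hA, Measure.smul_apply, Measure.map_apply hT.measurable hA,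
    Measure.restrict_apply (hT.measurable hA), hset, Measure.hausdorffMeasure_smul₀ hd hs.ne']

lemma setIntegral_sphere_eq_rpow_smul (hd : 0 ≤ d) (hs : 0 < s) (f : E → G) :
    ∫ y in sphere (0 : E) s, f y ∂μH[d] = s ^ d • ∫ y in sphere (0 : E) 1, f (s • y) ∂μH[d] := by
  have hT : MeasurableEmbedding (s • · : E → E) :=
    (Homeomorph.smulOfNeZero s hs.ne').measurableEmbedding
  rw [hausdorffMeasure_restrict_sphere_eq_smul_map hd hs, integral_smul_nnreal_measure,
    hT.integral_map, NNReal.smul_def, NNReal.coe_rpow, coe_nnnorm, Real.norm_of_nonneg hs.le]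

end Scaling

lemma lipschitzOnWith_integral {X α G : Type*} [PseudoMetricSpace X] [MeasurableSpace α]
    [NormedAddCommGroup G] [NormedSpace ℝ G] {μ : Measure α} [IsFiniteMeasure μ]
    {g : X → α → G} {T : Set X} {K : ℝ≥0} (hint : ∀ x ∈ T, Integrable (g x) μ)
    (hg : ∀ᵐ a ∂μ, LipschitzOnWith K (g · a) T) :
    LipschitzOnWith (K * (μ univ).toNNReal) (fun x => ∫ a, g x a ∂μ) T := by
  refine LipschitzOnWith.of_dist_le_mul fun x hx y hy => ?_
  rw [dist_eq_norm, ← integral_sub (hint x hx) (hint y hy)]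
  calc ‖∫ a, g x a - g y a ∂μ‖ ≤ K * dist x y * μ.real univ :=
        norm_integral_le_of_norm_le_const <| hg.mono fun a ha => by
          simpa only [dist_eq_norm] using ha.dist_le_mul x hx y hy
    _ = _ := by rw [NNReal.coe_mul, ENNReal.coe_toNNReal_eq_toReal, measureReal_def]; ring

lemma LipschitzOnWith.exists_lipschitzOnWith_mul {α R : Type*} [PseudoMetricSpace α]
    [SeminormedRing R] {f g : α → R} {s : Set α} {Kf Kg : ℝ≥0} (hs : IsCompact s)
    (hf : LipschitzOnWith Kf f s) (hg : LipschitzOnWith Kg g s) :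
    ∃ K, LipschitzOnWith K (fun x => f x * g x) s := by
  obtain ⟨Mf, hMf⟩ := hs.exists_bound_of_continuousOn hf.continuousOn
  obtain ⟨Mg, hMg⟩ := hs.exists_bound_of_continuousOn hg.continuousOn
  refine ⟨Kf * Mg.toNNReal + Mf.toNNReal * Kg, .of_dist_le_mul fun x hx y hy => ?_⟩
  have hMf0 : 0 ≤ Mf := (norm_nonneg _).trans (hMf x hx)
  have hMg0 : 0 ≤ Mg := (norm_nonneg _).trans (hMg x hx)
  have hdecomp : f x * g x - f y * g y = (f x - f y) * g x + f y * (g x - g y) := by noncomm_ring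
  rw [dist_eq_norm, hdecomp]
  calc ‖(f x - f y) * g x + f y * (g x - g y)‖
      ≤ ‖f x - f y‖ * ‖g x‖ + ‖f y‖ * ‖g x - g y‖ :=
        norm_add_le_of_le (norm_mul_le _ _) (norm_mul_le _ _)
    _ ≤ Kf * dist x y * Mg + Mf * (Kg * dist x y) := by
        rw [← dist_eq_norm, ← dist_eq_norm]
        exact add_le_add
          (mul_le_mul (hf.dist_le_mul x hx y hy) (hMg x hx) (norm_nonneg _) (by positivity))
          (mul_le_mul (hMf y hy) (hg.dist_le_mul x hx y hy) dist_nonneg hMf0)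
    _ = (Kf * Mg.toNNReal + Mf.toNNReal * Kg : ℝ≥0) * dist x y := by
        push_cast [Real.coe_toNNReal _ hMf0, Real.coe_toNNReal _ hMg0]
        ring

theorem exists_lipschitzOnWith_setIntegral_sphere {E : Type*} [NormedAddCommGroup E]
    [NormedSpace ℝ E] [ProperSpace E] [MeasurableSpace E] [BorelSpace E] {d : ℝ} (hd : 0 ≤ d)
    (hE : μH[d] (sphere (0 : E) 1) ≠ ∞) {f : E → ℝ} {a b : ℝ} (ha : 0 < a) {K : ℝ≥0}
    (hf : LipschitzOnWith K f (norm ⁻¹' Icc a b)) :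
    ∃ L, LipschitzOnWith L (fun s => ∫ y in sphere (0 : E) s, f y ∂μH[d]) (Icc a b) := by
  have : IsFiniteMeasure (μH[d].restrict (sphere (0 : E) 1)) := isFiniteMeasure_restrict.2 hE
  have hmaps : ∀ s ∈ Icc a b, MapsTo (s • ·) (sphere (0 : E) 1) (norm ⁻¹' Icc a b) :=
    fun s hs y hy => by
      simpa [norm_smul, abs_of_pos (ha.trans_le hs.1), mem_sphere_zero_iff_norm.1 hy] using hs
  have hint : ∀ s ∈ Icc a b,
      Integrable (fun y => f (s • y)) (μH[d].restrict (sphere (0 : E) 1)) := fun s hs =>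
    ContinuousOn.integrableOn_of_subset_isCompact
      (hf.continuousOn.comp (continuous_const_smul s).continuousOn (hmaps s hs))
      (isCompact_sphere 0 1) isClosed_sphere.measurableSet subset_rfl hE
  have hradial : ∀ y ∈ sphere (0 : E) 1, LipschitzOnWith K (fun s : ℝ => f (s • y)) (Icc a b) := by
    refine fun y hy => .of_dist_le_mul fun s hs t ht => ?_
    calc dist (f (s • y)) (f (t • y)) ≤ K * dist (s • y) (t • y) :=
          hf.dist_le_mul _ (hmaps s hs hy) _ (hmaps t ht hy)
      _ = K * dist s t := by
          rw [dist_eq_norm, ← sub_smul, norm_smul, mem_sphere_zero_iff_norm.1 hy, mul_one,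
            ← dist_eq_norm]
  have hJ := lipschitzOnWith_integral hint
    (ae_restrict_of_forall_mem isClosed_sphere.measurableSet hradial)
  obtain ⟨Kpow, hpow⟩ : ∃ K', LipschitzOnWith K' (fun s : ℝ => s ^ d) (Icc a b) :=
    ContDiffOn.exists_lipschitzOnWith (n := 1)
      (fun s hs => (Real.contDiffAt_rpow_const_of_ne (ha.trans_le hs.1).ne').contDiffWithinAt)
      one_ne_zero (convex_Icc a b) isCompact_Icc
  obtain ⟨L, hL⟩ := hpow.exists_lipschitzOnWith_mul isCompact_Icc hJ
  refine ⟨L, fun s hs t ht => ?_⟩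
  simp only [setIntegral_sphere_eq_rpow_smul hd (ha.trans_le hs.1),
    setIntegral_sphere_eq_rpow_smul hd (ha.trans_le ht.1), smul_eq_mul]
  exact hL hs ht

/-- If `f : ℝⁿ \ {0} → ℝ` is locally Lipschitz, then
`I(s) = ∫_{∂B_s(0)} f dH^{n-1}` is locally Lipschitz on `(0, ∞)`. -/
theorem stmt_2 (n : ℕ) (hn : 2 ≤ n) (f : EuclideanSpace ℝ (Fin n) → ℝ)
    (hf : ∀ x : EuclideanSpace ℝ (Fin n), x ≠ 0 →
      ∃ ε > (0:ℝ), ∃ K : NNReal, LipschitzOnWith K f (Metric.ball x ε)) :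
    ∀ c d : ℝ, 0 < c → c ≤ d →
      ∃ K : NNReal, LipschitzOnWith K
        (fun s : ℝ => ∫ y in Metric.sphere (0 : EuclideanSpace ℝ (Fin n)) s, f y
          ∂(Measure.hausdorffMeasure ((n : ℝ) - 1)))
        (Set.Icc c d) := by
  intro c d hc _
  obtain ⟨m, rfl⟩ : ∃ m, n = m + 1 := ⟨n - 1, by omega⟩
  have hdim : ((m + 1 : ℕ) : ℝ) - 1 = m := by push_cast; ring
  have hannulus : IsCompact (norm ⁻¹' Icc c d : Set (EuclideanSpace ℝ (Fin (m + 1)))) :=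
    (isCompact_closedBall 0 d).of_isClosed_subset (isClosed_Icc.preimage continuous_norm)
      fun x hx => mem_closedBall_zero_iff.2 hx.2
  have hlocal : LocallyLipschitzOn (norm ⁻¹' Icc c d) f := fun x hx => by
    obtain ⟨ε, hε, K, hK⟩ := hf x (norm_pos_iff.1 (hc.trans_le hx.1))
    exact ⟨K, ball x ε, mem_nhdsWithin_of_mem_nhds (ball_mem_nhds x hε), hK⟩
  obtain ⟨K, hK⟩ := hlocal.exists_lipschitzOnWith_of_compact hannulus
  rw [hdim]
  exact exists_lipschitzOnWith_setIntegral_sphere m.cast_nonneg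
    (hausdorffMeasure_unitSphere_lt_top m).ne hc hK
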